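/- Suppose additionally y ∈ A and λ ∈ F satisfy hy − yh = λy. Then in A[[t]]: v · y · u = (1−et)^{−λ} · Σ_{ℓ≥0} d^{(ℓ)}(y) · h_{1}^{⟨ℓ⟩} · t^ℓ, where u := u_0 and v := v_0 (so that v = u⁻¹). Equivalently, the twisted antipode satisfies S(y) = u⁻¹·(−y)·u = −(1−et)^{−λ} Σ_{ℓ≥0} d^{(ℓ)}(y) h_1^{⟨ℓ⟩} t^ℓ. (This is the deformed antipode formula of the paper's Theorem 3.5, proved in U(𝐊)[[t]] with h = D_K(x^{ε_k+ε_{−k}}), e = D_K(x^{2ε_k+ε_{−k}}), y = D_K(x^α), λ = α_k − α_{−k}; only the stated commutation relations are used.) -/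

import Mathlib

/-- Falling factorial `x_a^{[m]} := (x+a)(x+a-1)⋯(x+a-m+1)` in an `F`-algebra `A`. -/
def fallPow {F A : Type*} [Field F] [Ring A] [Algebra F A] (x : A) (a : F) : ℕ → A
  | 0 => 1
  | m + 1 => fallPow x a m * (x + algebraMap F A (a - (m : F)))

/-- Rising factorial `x_a^{⟨m⟩} := (x+a)(x+a+1)⋯(x+a+m-1)` in an `F`-algebra `A`. -/
def risePow {F A : Type*} [Field F] [Ring A] [Algebra F A] (x : A) (a : F) : ℕ → A
  | 0 => 1
  | m + 1 => risePow x a m * (x + algebraMap F A (a + (m : F)))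

/-- Scalar rising factorial `c^{⟨m⟩} = c(c+1)⋯(c+m-1)` in `F`. -/
def riseC {F : Type*} [Field F] (c : F) (m : ℕ) : F :=
  ∏ i ∈ Finset.range m, (c + (i : F))

/-- `(1−et)^{−c} = Σ_{r≥0} (1/r!) c^{⟨r⟩} e^r t^r ∈ A[[t]]`. -/
noncomputable def oneSubEtNegPow {F A : Type*} [Field F] [Ring A] [Algebra F A]
    (e : A) (c : F) : PowerSeries A :=
  PowerSeries.mk fun r => (((r.factorial : F))⁻¹ * riseC c r) • e ^ r

/-- `u_a = Σ_{r≥0} ((−1)^r/r!) h_{−a}^{[r]} e^r t^r ∈ A[[t]]`. -/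
noncomputable def uSer {F A : Type*} [Field F] [Ring A] [Algebra F A] (h e : A) (a : F) :
    PowerSeries A :=
  PowerSeries.mk fun r => ((-1 : F) ^ r / (r.factorial : F)) • (fallPow h (-a) r * e ^ r)

/-- `v_a = Σ_{r≥0} (1/r!) h_a^{[r]} e^r t^r ∈ A[[t]]`. -/
noncomputable def vSer {F A : Type*} [Field F] [Ring A] [Algebra F A] (h e : A) (a : F) :
    PowerSeries A :=
  PowerSeries.mk fun r => ((r.factorial : F))⁻¹ • (fallPow h a r * e ^ r)

/-- The divided power `d^{(ℓ)} = (1/ℓ!)(ad e)^ℓ` of the inner derivation `ad e`. -/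
def dPow (F : Type*) {A : Type*} [Field F] [Ring A] [Algebra F A]
    (e : A) (ℓ : ℕ) (x : A) : A :=
  ((ℓ.factorial : F))⁻¹ • ((fun z => e * z - z * e)^[ℓ] x)


/-!
Both sides, as power series in `t`, solve the formal differential equation `X' = [he, X]` with
`X(0) = y`, and in characteristic zero this equation has only one solution. For the left side this
follows from `v' = he · v` and `u' = -u · he`. For the right side, write `P = (1 - et)^{-λ}` and
`Q = Σ d^{(ℓ)}(y) h_1^{⟨ℓ⟩} t^ℓ`; then `P' = λe · P + [he, P]` and `Q' = [he, Q] - λe · Q`, and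
since `P` commutes with `e` the two `λ`-terms cancel in `(PQ)' = P'Q + PQ'`.
-/

namespace PowerSeries

variable {A : Type*}

section Semiring

variable [Semiring A]

/-- Mathlib's `PowerSeries.derivative` needs commutative coefficients. -/
noncomputable def formalDeriv (f : A⟦X⟧) : A⟦X⟧ :=
  mk fun n => (n + 1) • coeff (n + 1) f

@[simp]
theorem coeff_formalDeriv (f : A⟦X⟧) (n : ℕ) :
    coeff n (formalDeriv f) = (n + 1) • coeff (n + 1) f :=
  coeff_mk _ _

@[simp]
theorem formalDeriv_C (a : A) : formalDeriv (C a) = 0 := by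
  ext n
  simp

theorem formalDeriv_mul (f g : A⟦X⟧) :
    formalDeriv (f * g) = formalDeriv f * g + f * formalDeriv g := by
  ext n
  have hsplit : (n + 1) • coeff (n + 1) (f * g) =
      ∑ p ∈ Finset.HasAntidiagonal.antidiagonal (n + 1), p.1 • (coeff p.1 f * coeff p.2 g) +
      ∑ p ∈ Finset.HasAntidiagonal.antidiagonal (n + 1), p.2 • (coeff p.1 f * coeff p.2 g) := by
    rw [coeff_mul, Finset.smul_sum, ← Finset.sum_add_distrib]
    refine Finset.sum_congr rfl fun p hp => ?_
    rw [← add_smul, Finset.HasAntidiagonal.mem_antidiagonal.mp hp]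
  rw [coeff_formalDeriv, hsplit, Finset.Nat.sum_antidiagonal_succ,
    Finset.Nat.sum_antidiagonal_succ', map_add, coeff_mul, coeff_mul]
  simp only [zero_smul, zero_add, coeff_formalDeriv, smul_mul_assoc, mul_smul_comm]

end Semiring

theorem eq_of_formalDeriv_eq_commutator [Ring A] [IsAddTorsionFree A] {w : A} {f g : A⟦X⟧}
    (hf : formalDeriv f = C w * f - f * C w) (hg : formalDeriv g = C w * g - g * C w)
    (h0 : constantCoeff f = constantCoeff g) : f = g := by
  ext n
  induction n with
  | zero => simpa using h0
  | succ n ih =>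
    refine nsmul_right_injective n.succ_ne_zero ?_
    have hf' := congrArg (coeff n) hf
    have hg' := congrArg (coeff n) hg
    simp only [coeff_formalDeriv, map_sub, coeff_C_mul, coeff_mul_C] at hf' hg'
    simp only [hf', hg', ih]

end PowerSeries

section ShiftRelations

variable {F A : Type*} [Field F] [Ring A] [Algebra F A]

theorem fallPow_succ' (x : A) (a : F) (m : ℕ) :
    fallPow x a (m + 1) = (x + algebraMap F A a) * fallPow x (a - 1) m := by
  induction m with
  | zero => simp [fallPow]
  | succ m ih =>
    rw [fallPow, ih, fallPow, mul_assoc]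
    congr 4
    push_cast
    ring

theorem risePow_succ' (x : A) (a : F) (m : ℕ) :
    risePow x a (m + 1) = (x + algebraMap F A a) * risePow x (a + 1) m := by
  induction m with
  | zero => simp [risePow]
  | succ m ih =>
    rw [risePow, ih, risePow, mul_assoc]
    congr 4
    push_cast
    ring

theorem commute_add_algebraMap_risePow (x : A) (a c : F) (m : ℕ) :
    Commute (x + algebraMap F A c) (risePow x a m) := by
  have hx : ∀ b : F, Commute (x + algebraMap F A c) (x + algebraMap F A b) := fun b =>
    ((Commute.refl x).add_right (Algebra.commute_algebraMap_right b x)).add_left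
      (Algebra.commute_algebraMap_left c _)
  induction m with
  | zero => exact Commute.one_right _
  | succ m ih => exact ih.mul_right (hx _)

variable {h e : A}

theorem add_algebraMap_mul_e (he : h * e - e * h = e) (c : F) :
    (h + algebraMap F A c) * e = e * (h + algebraMap F A (c + 1)) := by
  rw [add_mul, sub_eq_iff_eq_add'.mp he, Algebra.commutes, map_add, map_one]
  noncomm_ring

theorem e_mul_fallPow (he : h * e - e * h = e) (a : F) (m : ℕ) :
    e * fallPow h a m = fallPow h (a - 1) m * e := by
  induction m with
  | zero => simp [fallPow]
  | succ m ih =>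
    have hshift := add_algebraMap_mul_e he (a - 1 - m)
    rw [show a - 1 - m + 1 = a - m by ring] at hshift
    rw [fallPow, fallPow, ← mul_assoc, ih, mul_assoc, ← hshift, mul_assoc]

theorem risePow_mul_e (he : h * e - e * h = e) (a : F) (m : ℕ) :
    risePow h a m * e = e * risePow h (a + 1) m := by
  induction m with
  | zero => simp [risePow]
  | succ m ih =>
    rw [risePow, risePow, mul_assoc, add_algebraMap_mul_e he, ← mul_assoc, ih, mul_assoc,
      add_right_comm]

theorem commutator_h_pow (he : h * e - e * h = e) (k : ℕ) :
    h * e ^ k - e ^ k * h = k • e ^ k := by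
  induction k with
  | zero => simp
  | succ k ih =>
    calc h * e ^ (k + 1) - e ^ (k + 1) * h
        = (h * e ^ k - e ^ k * h) * e + e ^ k * (h * e - e * h) := by rw [pow_succ]; noncomm_ring
      _ = (k + 1) • e ^ (k + 1) := by rw [ih, he, smul_mul_assoc, ← pow_succ, succ_nsmul]

theorem commutator_h_iterate_ad (he : h * e - e * h = e) {y : A} {c : F}
    (hy : h * y - y * h = c • y) (ℓ : ℕ) :
    h * (fun z => e * z - z * e)^[ℓ] y - (fun z => e * z - z * e)^[ℓ] y * h =
      (c + ℓ) • (fun z => e * z - z * e)^[ℓ] y := by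
  induction ℓ with
  | zero => simpa using hy
  | succ ℓ ih =>
    set z := (fun z => e * z - z * e)^[ℓ] y
    rw [Function.iterate_succ_apply']
    calc h * (e * z - z * e) - (e * z - z * e) * h
        = (h * e - e * h) * z - z * (h * e - e * h) + e * (h * z - z * h) -
            (h * z - z * h) * e := by
          noncomm_ring
      _ = (c + ↑(ℓ + 1)) • (e * z - z * e) := by
          rw [he, ih, mul_smul_comm, smul_mul_assoc, Nat.cast_succ]
          module

theorem risePow_mul_add_algebraMap_mul_e (he : h * e - e * h = e) (a : F) (m : ℕ) :
    risePow h a m * ((h + algebraMap F A (a - 1)) * e) = e * risePow h a (m + 1) := by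
  rw [add_algebraMap_mul_e he, sub_add_cancel, ← mul_assoc, risePow_mul_e he, mul_assoc,
    ← (commute_add_algebraMap_risePow h (a + 1) a m).eq, risePow_succ']

theorem commutator_h_mul_e_pow (he : h * e - e * h = e) (n : ℕ) :
    h * e * e ^ n - e ^ n * (h * e) = n • e ^ (n + 1) := by
  calc h * e * e ^ n - e ^ n * (h * e)
      = (h * e ^ (n + 1) - e ^ (n + 1) * h) - e ^ n * (h * e - e * h) := by
        rw [mul_assoc h e, ← pow_succ', pow_succ]; noncomm_ring
    _ = n • e ^ (n + 1) := by
        rw [commutator_h_pow he, he, ← pow_succ, succ_nsmul, add_sub_cancel_right]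

/-- For `z = (ad e)^n y`, which has `h`-weight `λ + n`, this is the `t^n`-coefficient of
`Q' = [he, Q] - λe · Q`. -/
theorem commutator_h_mul_e_mul_risePow (he : h * e - e * h = e) {z : A} {c : F} {n : ℕ}
    (hz : h * z - z * h = (c + n) • z) :
    h * e * (z * risePow h (1 : F) n) - z * risePow h (1 : F) n * (h * e) -
        c • (e * (z * risePow h (1 : F) n)) =
      (e * z - z * e) * risePow h (1 : F) (n + 1) := by
  have hRhe : risePow h (1 : F) n * (h * e) = e * risePow h (1 : F) (n + 1) := by
    simpa using risePow_mul_add_algebraMap_mul_e he (1 : F) n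
  have hR' : risePow h (1 : F) (n + 1) =
      risePow h (1 : F) n * h + (1 + n : F) • risePow h (1 : F) n := by
    rw [risePow, mul_add, Algebra.smul_def, ← Algebra.commutes]
  have hhe : ∀ X, h * (e * X) = e * (h * X) + e * X := fun X => by
    rw [← mul_assoc, sub_eq_iff_eq_add'.mp he]; noncomm_ring
  have hhz : ∀ X, h * (z * X) = z * (h * X) + (c + n) • (z * X) := fun X => by
    rw [← mul_assoc, sub_eq_iff_eq_add'.mp hz, add_mul, smul_mul_assoc, mul_assoc]
  have hhR : h * risePow h (1 : F) n = risePow h (1 : F) n * h := by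
    simpa using (commute_add_algebraMap_risePow h (1 : F) 0 n).eq
  rw [mul_assoc z, hRhe, hR']
  simp only [mul_add, sub_mul, mul_smul_comm, mul_assoc, hhe, hhz, hhR]
  module

end ShiftRelations

theorem succ_nsmul_inv_factorial_succ_smul {F M : Type*} [Field F] [CharZero F] [AddCommGroup M]
    [Module F M] (n : ℕ) (x : M) :
    (n + 1) • (((n + 1).factorial : F)⁻¹ • x) = ((n.factorial : F)⁻¹ • x) := by
  rw [← Nat.cast_smul_eq_nsmul F, smul_smul]
  congr 1
  push_cast [Nat.factorial_succ]
  field_simp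

section Series

open PowerSeries

variable {F A : Type*} [Field F] [Ring A] [Algebra F A] {h e : A}

theorem commute_C_smul_oneSubEtNegPow (a c : F) :
    Commute (C (a • e)) (oneSubEtNegPow e c) := by
  show _ = _
  ext n
  rw [coeff_C_mul, coeff_mul_C, oneSubEtNegPow, coeff_mk, smul_mul_smul_comm, smul_mul_smul_comm,
    mul_comm a, pow_mul_comm']

variable [CharZero F]

theorem formalDeriv_vSer (he : h * e - e * h = e) :
    formalDeriv (vSer h e (0 : F)) = C (h * e) * vSer h e (0 : F) := by
  have hstep (n : ℕ) :
      h * e * (fallPow h (0 : F) n * e ^ n) = fallPow h (0 : F) (n + 1) * e ^ (n + 1) := by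
    calc h * e * (fallPow h (0 : F) n * e ^ n) = h * (e * fallPow h (0 : F) n) * e ^ n := by
          noncomm_ring
      _ = h * (fallPow h (0 - 1 : F) n * e) * e ^ n := by rw [e_mul_fallPow he]
      _ = fallPow h (0 : F) (n + 1) * e ^ (n + 1) := by
          rw [fallPow_succ', map_zero, add_zero, pow_succ']; noncomm_ring
  ext n
  rw [coeff_formalDeriv, coeff_C_mul, vSer, coeff_mk, coeff_mk, succ_nsmul_inv_factorial_succ_smul,
    mul_smul_comm, hstep]

theorem formalDeriv_uSer (he : h * e - e * h = e) :
    formalDeriv (uSer h e (0 : F)) = -(uSer h e (0 : F) * C (h * e)) := by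
  have hstep (n : ℕ) :
      fallPow h (0 : F) n * e ^ n * (h * e) = fallPow h (0 : F) (n + 1) * e ^ (n + 1) := by
    have hpow : e ^ n * h = (h + algebraMap F A (0 - n)) * e ^ n := by
      rw [add_mul, zero_sub, map_neg, map_natCast, neg_mul, ← nsmul_eq_mul,
        ← commutator_h_pow he]
      abel
    calc fallPow h (0 : F) n * e ^ n * (h * e) = fallPow h (0 : F) n * (e ^ n * h) * e := by
          noncomm_ring
      _ = fallPow h (0 : F) (n + 1) * e ^ (n + 1) := by
          rw [hpow, fallPow, pow_succ]; noncomm_ring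
  ext n
  rw [map_neg, coeff_formalDeriv, coeff_mul_C, uSer, coeff_mk, coeff_mk, neg_zero, div_eq_inv_mul,
    ← smul_smul, succ_nsmul_inv_factorial_succ_smul, div_eq_inv_mul, ← smul_smul, smul_mul_assoc,
    smul_mul_assoc, hstep, pow_succ, mul_neg_one, neg_smul, smul_neg]

theorem formalDeriv_oneSubEtNegPow (he : h * e - e * h = e) (c : F) :
    formalDeriv (oneSubEtNegPow e c) = C (c • e) * oneSubEtNegPow e c +
      (C (h * e) * oneSubEtNegPow e c - oneSubEtNegPow e c * C (h * e)) := by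
  ext n
  simp only [oneSubEtNegPow, coeff_formalDeriv, map_add, map_sub, coeff_C_mul, coeff_mul_C,
    coeff_mk, ← smul_smul, succ_nsmul_inv_factorial_succ_smul, riseC, Finset.prod_range_succ]
  simp only [mul_smul_comm, smul_mul_assoc, ← smul_sub]
  rw [commutator_h_mul_e_pow he, ← pow_succ', ← Nat.cast_smul_eq_nsmul F]
  module

theorem formalDeriv_mk_dPow_mul_risePow (he : h * e - e * h = e) {y : A} {c : F}
    (hy : h * y - y * h = c • y) :
    formalDeriv (mk fun ℓ => dPow F e ℓ y * risePow h (1 : F) ℓ) =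
      C (h * e) * (mk fun ℓ => dPow F e ℓ y * risePow h (1 : F) ℓ) -
        (mk fun ℓ => dPow F e ℓ y * risePow h (1 : F) ℓ) * C (h * e) -
          C (c • e) * (mk fun ℓ => dPow F e ℓ y * risePow h (1 : F) ℓ) := by
  ext n
  simp only [coeff_formalDeriv, map_sub, coeff_C_mul, coeff_mul_C, coeff_mk, dPow, smul_mul_assoc,
    succ_nsmul_inv_factorial_succ_smul, Function.iterate_succ_apply',
    ← commutator_h_mul_e_mul_risePow he (commutator_h_iterate_ad he hy n)]
  simp only [mul_smul_comm, smul_sub, smul_comm c]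

end Series

/-- Deformed antipode formula: if `he − eh = e` and `hy − yh = λ·y`, then
`v · y · u = (1−et)^{−λ} · Σ_{ℓ≥0} d^{(ℓ)}(y) h_1^{⟨ℓ⟩} t^ℓ` in `A[[t]]`,
where `u = u_0` and `v = v_0 = u⁻¹`. -/
theorem deformed_antipode {F A : Type*} [Field F] [CharZero F] [Ring A] [Algebra F A]
    (h e : A) (he : h * e - e * h = e)
    (y : A) (lam : F) (hy : h * y - y * h = lam • y) :
    vSer h e (0 : F) * PowerSeries.C y * uSer h e (0 : F) =
      oneSubEtNegPow e lam *
        PowerSeries.mk (fun ℓ => dPow F e ℓ y * risePow h (1 : F) ℓ) := by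
  have : IsAddTorsionFree A := .of_isTorsionFree F A
  refine PowerSeries.eq_of_formalDeriv_eq_commutator (w := h * e) ?_ ?_ ?_
  · rw [PowerSeries.formalDeriv_mul, PowerSeries.formalDeriv_mul, PowerSeries.formalDeriv_C,
      formalDeriv_vSer he, formalDeriv_uSer he]
    noncomm_ring
  · rw [PowerSeries.formalDeriv_mul, formalDeriv_oneSubEtNegPow he,
      formalDeriv_mk_dPow_mul_risePow he hy, (commute_C_smul_oneSubEtNegPow lam lam).eq]
    noncomm_ring
  · simp [vSer, uSer, oneSubEtNegPow, dPow, fallPow, risePow, riseC]
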